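/- arXiv:1306.3736 — 2 statements merged into one kernel-verified Lean document; each statement's English description precedes it below -/
import Mathlib

section
/- Let r ≥ 2 and let f ∈ P = ℂ[X_0, …, X_r] be a squarefree homogeneous polynomial of degree d ≥ 1. Then the projective hypersurface X = V(f) ⊂ ℙ^r is nonsingular — meaning that for every nonzero point a ∈ ℂ^{r+1} at least one partial derivative ∂f/∂X_i does not vanish at a — if and only if the jacobian ring R(f) = P/J(f) is a finite-dimensional ℂ-vector space (i.e., has finite length as a P-module). -/
/-!
The partial derivatives of `f` are homogeneous, so the zero locus `V(J(f)) ⊆ ℂ^{r+1}` is a cone;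
over an infinite field a cone is finite only if it is the origin. If `V(J(f)) = {0}`, the
Nullstellensatz makes every `X_i` nilpotent modulo `J(f)`, so `R(f)` is spanned by finitely many
monomials. Conversely, every point of `V(J(f))` gives a `ℂ`-algebra map `R(f) → ℂ`, and a
finite-dimensional algebra has only finitely many of these (linear independence of characters),
so `V(J(f))` is finite, hence the origin.
-/

open MvPolynomial

noncomputable section

/-- The polynomial ring `P = ℂ[X_0, …, X_r]`. -/
abbrev P (r : ℕ) : Type := MvPolynomial (Fin (r + 1)) ℂ

/-- The gradient (jacobian) ideal `J(f) = (∂f/∂X_0, …, ∂f/∂X_r)`. -/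
def jacobianIdeal (r : ℕ) (f : P r) : Ideal (P r) :=
  Ideal.span (Set.range fun i => MvPolynomial.pderiv i f)

theorem Set.Finite.subset_zero_of_smul_mem {K M : Type*} [DivisionRing K] [Infinite K]
    [AddCommGroup M] [Module K M] {S : Set M} (hS : S.Finite)
    (hcone : ∀ x ∈ S, ∀ t : K, t • x ∈ S) : S ⊆ {0} := by
  intro x hx
  by_contra hx0
  have hline : Set.range (fun t : K => t • x) ⊆ S := Set.range_subset_iff.mpr (hcone x hx)
  exact Set.infinite_range_of_injective (smul_left_injective K hx0) (hS.subset hline)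

namespace MvPolynomial

theorem IsHomogeneous.aeval_smul {R S σ : Type*} [CommSemiring R] [CommSemiring S] [Algebra R S]
    {φ : MvPolynomial σ R} {n : ℕ} (hφ : φ.IsHomogeneous n) (t : S) (x : σ → S) :
    MvPolynomial.aeval (t • x) φ = t ^ n * MvPolynomial.aeval x φ := by
  simp only [aeval_eq_eval₂Hom, coe_eval₂Hom, eval₂_eq, Finset.mul_sum, Pi.smul_apply,
    smul_eq_mul, mul_pow, Finset.prod_mul_distrib, Finset.prod_pow_eq_pow_sum]
  refine Finset.sum_congr rfl fun s hs => ?_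
  rw [← hφ.degree_eq_sum_deg_support hs]
  ring

variable {k K σ : Type*} [Field k] [Field K] [Algebra k K]

theorem smul_mem_zeroLocus_span_of_isHomogeneous {S : Set (MvPolynomial σ k)}
    (hS : ∀ p ∈ S, ∃ n, p.IsHomogeneous n) {x : σ → K} (hx : x ∈ zeroLocus K (Ideal.span S))
    (t : K) : t • x ∈ zeroLocus K (Ideal.span S) := by
  rw [zeroLocus_span] at hx ⊢
  intro p hp
  obtain ⟨n, hn⟩ := hS p hp
  rw [hn.aeval_smul, hx p hp, mul_zero]

theorem finite_zeroLocus_of_finite_quotient {I : Ideal (MvPolynomial σ k)}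
    [Module.Finite k (MvPolynomial σ k ⧸ I)] : (zeroLocus K I).Finite := by
  let evalAt (x : zeroLocus K I) : (MvPolynomial σ k ⧸ I) →ₐ[k] K :=
    Ideal.Quotient.liftₐ I (aeval x.1) x.2
  have hX (x : zeroLocus K I) (i : σ) : evalAt x (Ideal.Quotient.mk I (X i)) = x.1 i :=
    aeval_X x.1 i
  have hinj : Function.Injective evalAt := fun x y hxy =>
    Subtype.ext <| _root_.funext fun i => by rw [← hX, ← hX, hxy]
  exact Set.finite_coe_iff.mp (Finite.of_injective evalAt hinj)

theorem finite_quotient_of_forall_X_mem_radical {R : Type*} [CommRing R] [Finite σ]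
    {I : Ideal (MvPolynomial σ R)} (h : ∀ i, X i ∈ I.radical) :
    Module.Finite R (MvPolynomial σ R ⧸ I) := by
  set gens := Ideal.Quotient.mkₐ R I '' Set.range X
  have hgens : Algebra.adjoin R gens = ⊤ := by
    rw [← AlgHom.map_adjoin, adjoin_range_X, Algebra.map_top, AlgHom.range_eq_top]
    exact Ideal.Quotient.mkₐ_surjective R I
  have hint : ∀ y ∈ gens, IsIntegral R y := by
    rintro _ ⟨_, ⟨i, rfl⟩, rfl⟩
    obtain ⟨n, hn⟩ := h i
    refine ⟨Polynomial.X ^ n, Polynomial.monic_X_pow n, ?_⟩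
    rwa [Polynomial.eval₂_X_pow, ← map_pow, Ideal.Quotient.mkₐ_eq_mk,
      Ideal.Quotient.eq_zero_iff_mem]
  have := Algebra.finite_adjoin_of_finite_of_isIntegral ((Set.finite_range X).image _) hint
  rw [hgens] at this
  exact Module.Finite.equiv Subalgebra.topEquiv.toLinearEquiv

theorem finite_quotient_of_zeroLocus_subset_zero [IsAlgClosed K] [Finite σ]
    {I : Ideal (MvPolynomial σ K)} (h : zeroLocus K I ⊆ {0}) :
    Module.Finite K (MvPolynomial σ K ⧸ I) := by
  refine finite_quotient_of_forall_X_mem_radical fun i => ?_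
  rw [← vanishingIdeal_zeroLocus_eq_radical (K := K)]
  intro x hx
  simp [Set.mem_singleton_iff.mp (h hx)]

end MvPolynomial

theorem stmt_6_general (r : ℕ) (f : P r) (d : ℕ)
    (hfh : f.IsHomogeneous d) :
    (∀ a : Fin (r + 1) → ℂ, a ≠ 0 → ∃ i, eval a (MvPolynomial.pderiv i f) ≠ 0) ↔
      FiniteDimensional ℂ (P r ⧸ jacobianIdeal r f) := by
  have hsing : (∀ a : Fin (r + 1) → ℂ, a ≠ 0 → ∃ i, eval a (pderiv i f) ≠ 0) ↔
      zeroLocus ℂ (jacobianIdeal r f) ⊆ {0} := by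
    simp only [jacobianIdeal, zeroLocus_span, Set.subset_def, Set.forall_mem_range,
      Set.mem_singleton_iff]
    exact forall_congr' fun a => by rw [not_imp_comm]; push Not; rfl
  have hcone : ∀ x ∈ zeroLocus ℂ (jacobianIdeal r f), ∀ t : ℂ,
      t • x ∈ zeroLocus ℂ (jacobianIdeal r f) :=
    fun x hx => smul_mem_zeroLocus_span_of_isHomogeneous
      (by rintro _ ⟨i, rfl⟩; exact ⟨d - 1, hfh.pderiv⟩) hx
  rw [hsing]
  exact ⟨finite_quotient_of_zeroLocus_subset_zero,
    fun _ => finite_zeroLocus_of_finite_quotient.subset_zero_of_smul_mem hcone⟩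

theorem stmt_6 (r : ℕ) (hr : 2 ≤ r) (f : P r) (d : ℕ)
    (hsf : Squarefree f) (hfh : f.IsHomogeneous d) (hd : 1 ≤ d) :
    (∀ a : Fin (r + 1) → ℂ, a ≠ 0 → ∃ i, eval a (MvPolynomial.pderiv i f) ≠ 0) ↔
      FiniteDimensional ℂ (P r ⧸ jacobianIdeal r f) :=
  stmt_6_general r f d hfh
end
end

section
/- Let f ∈ P = ℂ[X_0, X_1, X_2] be a squarefree homogeneous polynomial of degree d ≥ 2 such that the Krull dimension of P/J(f) is at most 1, and let τ be the stable value of the Hilbert function of the jacobian ring, i.e., the constant value of dim_ℂ (P/J(f))_k for all sufficiently large k (the global Tjurina number of the curve V(f)). Suppose the syzygy module Syz = {(a_0, a_1, a_2) ∈ P³ : a_0·∂f/∂X_0 + a_1·∂f/∂X_1 + a_2·∂f/∂X_2 = 0} is a free graded P-module with a homogeneous basis consisting of two syzygies of degrees a and b (i.e., V(f) is a free curve with exponents a, b). Then a + b = d − 1 and a² + ab + b² = τ. -/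
open MvPolynomial

noncomputable section

/-- The polynomial ring `P = ℂ[X_0, X_1, X_2]`. -/
abbrev P3 : Type := MvPolynomial (Fin 3) ℂ

/-- The gradient (jacobian) ideal `J(f) = (∂f/∂X_0, ∂f/∂X_1, ∂f/∂X_2)`. -/
def jacobianIdeal3 (f : P3) : Ideal P3 :=
  Ideal.span (Set.range fun i => MvPolynomial.pderiv i f)

/-- The degree-`k` graded piece of `P/I`: the image in `P/I` of the space of
homogeneous polynomials of degree `k`, viewed as a `ℂ`-subspace. -/
def quotPiece3 (I : Ideal P3) (k : ℕ) : Submodule ℂ (P3 ⧸ I) :=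
  Submodule.map (Ideal.Quotient.mkₐ ℂ I).toLinearMap (homogeneousSubmodule (Fin 3) ℂ k)

/-- The module of syzygies of the partial derivatives of `f`:
triples `(a_0, a_1, a_2)` with `a_0·∂f/∂X_0 + a_1·∂f/∂X_1 + a_2·∂f/∂X_2 = 0`. -/
def syzygyModule (f : P3) : Submodule P3 (Fin 3 → P3) where
  carrier := {a | ∑ i, a i * MvPolynomial.pderiv i f = 0}
  zero_mem' := by simp
  add_mem' := by
    intro a b ha hb
    simp only [Set.mem_setOf_eq] at *
    simp [Pi.add_apply, add_mul, Finset.sum_add_distrib, ha, hb]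
  smul_mem' := by
    intro c a ha
    simp only [Set.mem_setOf_eq] at *
    simp [Pi.smul_apply, smul_eq_mul, mul_assoc, ← Finset.mul_sum, ha]

/-! With `w = d - 1`, the free basis `s, t` gives, degree by degree, the exact sequence
`0 → P_{e-a} ⊕ P_{e-b} → P_e³ → J_{e+w} → 0`, `(p, q) ↦ p s + q t`, `u ↦ Σ uᵢ ∂ᵢf`.
As `dim P_n = (n + 1)(n + 2)/2`, rank–nullity makes `dim (P/J)_{e+w}` a quadratic polynomial
in `e`. Its quadratic coefficient vanishes automatically; it is eventually constant only if
its linear coefficient `a + b - w` vanishes too, and then its constant term is `a² + ab + b²`. -/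

open Module

section Homogeneous

variable {σ R : Type*} [CommSemiring R]

attribute [local instance] MvPolynomial.gradedAlgebra in
theorem MvPolynomial.homogeneousComponent_add_mul_of_isHomogeneous {p g : MvPolynomial σ R}
    {m : ℕ} (hg : g.IsHomogeneous m) (n : ℕ) :
    homogeneousComponent (n + m) (p * g) = homogeneousComponent n p * g := by
  rw [← decomposition.decompose'_apply, ← decomposition.decompose'_apply]
  exact DirectSum.coe_decompose_mul_add_of_right_mem (homogeneousSubmodule σ R) hg

instance MvPolynomial.finite_homogeneousSubmodule [Finite σ] (n : ℕ) :
    Module.Finite R (homogeneousSubmodule σ R n) :=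
  .of_fg (homogeneousSubmodule_fg σ R n)

theorem MvPolynomial.card_setOf_degree_eq [Fintype σ] (n : ℕ) :
    Nat.card {d : σ →₀ ℕ | d.degree = n} = (Fintype.card σ + n - 1).choose n := by
  classical
  rw [← Sym.card_sym_eq_choose, ← Nat.card_eq_fintype_card]
  exact Nat.card_congr ((Sym.equivNatSum σ n).trans (Equiv.subtypeEquivRight fun _ => Iff.rfl)).symm

theorem MvPolynomial.finrank_homogeneousSubmodule {K : Type*} [Field K] [Fintype σ] (n : ℕ) :
    finrank K (homogeneousSubmodule σ K n) = (Fintype.card σ + n - 1).choose n := by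
  rw [homogeneousSubmodule_eq_finsupp_supported, ← card_setOf_degree_eq]
  exact finrank_eq_nat_card_basis (basisRestrictSupport K _)

theorem MvPolynomial.two_mul_finrank_homogeneousSubmodule_fin_three {K : Type*} [Field K]
    (n : ℕ) : 2 * finrank K (homogeneousSubmodule (Fin 3) K n) = (n + 1) * (n + 2) := by
  rw [finrank_homogeneousSubmodule, Fintype.card_fin, show 3 + n - 1 = n + 2 by omega,
    Nat.choose_symm_add]
  have := Nat.add_one_mul_choose_eq (n + 1) 1
  rw [Nat.choose_one_right] at this
  linarith

end Homogeneous

theorem LinearMap.finrank_map_add_finrank_inf_ker {K M N : Type*} [Field K] [AddCommGroup M]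
    [Module K M] [AddCommGroup N] [Module K N] (φ : M →ₗ[K] N) (V : Submodule K M)
    [FiniteDimensional K V] :
    finrank K (V.map φ) + finrank K (V ⊓ LinearMap.ker φ : Submodule K M) = finrank K V := by
  rw [← LinearMap.range_domRestrict, ← (φ.domRestrict V).finrank_range_add_finrank_ker,
    LinearMap.ker_domRestrict, ← Submodule.map_comap_subtype, Submodule.finrank_map_subtype_eq]

theorem Submodule.eq_span_pair_of_basis {R M : Type*} [Semiring R] [AddCommMonoid M] [Module R M]
    {S : Submodule R M} (B : Basis (Fin 2) R S) : S = span R {(B 0 : M), (B 1 : M)} := by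
  have hspan := congrArg (map S.subtype) B.span_eq
  rw [map_span, map_subtype_top, ← Set.range_comp] at hspan
  refine hspan.symm.trans ?_
  rw [← Matrix.range_cons_cons_empty _ _ ![]]
  congr 2
  ext j
  fin_cases j <;> rfl

theorem Submodule.linearIndependent_pair_of_basis {R M : Type*} [Ring R] [AddCommGroup M]
    [Module R M] {S : Submodule R M} (B : Basis (Fin 2) R S) :
    LinearIndependent R ![(B 0 : M), (B 1 : M)] := by
  convert B.linearIndependent.map' S.subtype S.ker_subtype using 1
  ext j
  fin_cases j <;> rfl

section GradedSyzygies

variable {σ K ι : Type*} [Field K]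

def gradedLinearCombination [Fintype ι] (g : ι → MvPolynomial σ K) (e : ℕ) :
    (ι → homogeneousSubmodule σ K e) →ₗ[K] MvPolynomial σ K :=
  (Fintype.linearCombination (MvPolynomial σ K) g).restrictScalars K ∘ₗ
    (homogeneousSubmodule σ K e).subtype.compLeft ι

theorem gradedLinearCombination_apply [Fintype ι] (g : ι → MvPolynomial σ K) (e : ℕ)
    (u : ι → homogeneousSubmodule σ K e) :
    gradedLinearCombination g e u = ∑ i, (u i : MvPolynomial σ K) * g i :=
  rfl

theorem range_gradedLinearCombination [Fintype ι] {g : ι → MvPolynomial σ K} {w : ℕ}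
    (hg : ∀ i, (g i).IsHomogeneous w) (e : ℕ) :
    LinearMap.range (gradedLinearCombination g e) =
      homogeneousSubmodule σ K (e + w) ⊓ (Ideal.span (Set.range g)).restrictScalars K := by
  apply le_antisymm
  · rintro _ ⟨u, rfl⟩
    rw [gradedLinearCombination_apply]
    exact ⟨Submodule.sum_mem _ fun i _ => (u i).2.mul (hg i),
      Ideal.sum_mem _ fun i _ => Ideal.mul_mem_left _ _ (Ideal.subset_span ⟨i, rfl⟩)⟩
  · rintro p ⟨hp, hpJ⟩
    obtain ⟨c, rfl⟩ := Ideal.mem_span_range_iff_exists_fun.mp hpJ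
    refine ⟨fun i => ⟨homogeneousComponent e (c i), homogeneousComponent_mem _ _⟩, ?_⟩
    rw [gradedLinearCombination_apply, ← homogeneousComponent_eq_self hp, map_sum]
    exact Finset.sum_congr rfl fun i _ =>
      (homogeneousComponent_add_mul_of_isHomogeneous (hg i) e).symm

def gradedPairCombination {s t : ι → MvPolynomial σ K} {a b p q e : ℕ}
    (hs : ∀ i, (s i).IsHomogeneous a) (ht : ∀ i, (t i).IsHomogeneous b)
    (hp : p + a = e) (hq : q + b = e) :
    homogeneousSubmodule σ K p × homogeneousSubmodule σ K q →ₗ[K]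
      (ι → homogeneousSubmodule σ K e) where
  toFun x i := ⟨x.1 * s i + x.2 * t i, (hp ▸ x.1.2.mul (hs i)).add (hq ▸ x.2.2.mul (ht i))⟩
  map_add' x y := by
    ext i : 2
    simp only [Prod.fst_add, Prod.snd_add, Submodule.coe_add, Pi.add_apply, add_mul]
    abel
  map_smul' c x := by
    ext i : 2
    simp [smul_add]

variable {s t : ι → MvPolynomial σ K} {a b p q e : ℕ}
  (hs : ∀ i, (s i).IsHomogeneous a) (ht : ∀ i, (t i).IsHomogeneous b)
  (hp : p + a = e) (hq : q + b = e)

theorem coe_gradedPairCombination (x : homogeneousSubmodule σ K p × homogeneousSubmodule σ K q) :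
    (fun i => (gradedPairCombination hs ht hp hq x i : MvPolynomial σ K)) =
      (x.1 : MvPolynomial σ K) • s + (x.2 : MvPolynomial σ K) • t :=
  rfl

theorem injective_gradedPairCombination (hli : LinearIndependent (MvPolynomial σ K) ![s, t]) :
    Function.Injective (gradedPairCombination hs ht hp hq) := by
  rw [← LinearMap.ker_eq_bot, Submodule.eq_bot_iff]
  intro x hx
  have hzero := coe_gradedPairCombination hs ht hp hq x
  rw [LinearMap.mem_ker.mp hx] at hzero
  obtain ⟨h1, h2⟩ := LinearIndependent.pair_iff.mp hli _ _ hzero.symm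
  exact Prod.ext (Subtype.ext h1) (Subtype.ext h2)

theorem ker_gradedLinearCombination [Fintype ι] {g : ι → MvPolynomial σ K}
    (hst : LinearMap.ker (Fintype.linearCombination (MvPolynomial σ K) g) =
      Submodule.span (MvPolynomial σ K) {s, t}) :
    LinearMap.ker (gradedLinearCombination g e) =
      LinearMap.range (gradedPairCombination hs ht hp hq) := by
  apply le_antisymm
  · intro u hu
    have hsyz : (fun i => (u i : MvPolynomial σ K)) ∈ Submodule.span (MvPolynomial σ K) {s, t} := by
      rw [← hst]
      exact hu
    obtain ⟨P, Q, hPQ⟩ := Submodule.mem_span_pair.mp hsyz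
    refine ⟨(⟨homogeneousComponent p P, homogeneousComponent_mem _ _⟩,
      ⟨homogeneousComponent q Q, homogeneousComponent_mem _ _⟩), ?_⟩
    ext i : 2
    have hP : homogeneousComponent e (P * s i) = homogeneousComponent p P * s i := by
      rw [← hp, homogeneousComponent_add_mul_of_isHomogeneous (hs i)]
    have hQ : homogeneousComponent e (Q * t i) = homogeneousComponent q Q * t i := by
      rw [← hq, homogeneousComponent_add_mul_of_isHomogeneous (ht i)]
    rw [← homogeneousComponent_eq_self (u i).2, ← congrFun hPQ i, Pi.add_apply, Pi.smul_apply,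
      Pi.smul_apply, smul_eq_mul, smul_eq_mul, map_add, hP, hQ]
    rfl
  · rintro _ ⟨x, rfl⟩
    have hx : (x.1 : MvPolynomial σ K) • s + (x.2 : MvPolynomial σ K) • t ∈
        LinearMap.ker (Fintype.linearCombination (MvPolynomial σ K) g) := by
      rw [hst]
      exact Submodule.mem_span_pair.mpr ⟨_, _, rfl⟩
    exact hx

end GradedSyzygies

theorem finrank_homogeneousSubmodule_inf_span_add_of_syzygies_eq_span_pair {σ K ι : Type*}
    [Field K] [Fintype σ] [Fintype ι] {g : ι → MvPolynomial σ K} {w : ℕ}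
    (hg : ∀ i, (g i).IsHomogeneous w) {s t : ι → MvPolynomial σ K} {a b p q e : ℕ}
    (hs : ∀ i, (s i).IsHomogeneous a) (ht : ∀ i, (t i).IsHomogeneous b)
    (hst : LinearMap.ker (Fintype.linearCombination (MvPolynomial σ K) g) =
      Submodule.span (MvPolynomial σ K) {s, t})
    (hli : LinearIndependent (MvPolynomial σ K) ![s, t]) (hp : p + a = e) (hq : q + b = e) :
    finrank K (homogeneousSubmodule σ K (e + w) ⊓
        (Ideal.span (Set.range g)).restrictScalars K : Submodule K (MvPolynomial σ K)) +
      finrank K (homogeneousSubmodule σ K p) + finrank K (homogeneousSubmodule σ K q) =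
      Fintype.card ι * finrank K (homogeneousSubmodule σ K e) := by
  have hker : finrank K (LinearMap.ker (gradedLinearCombination g e)) =
      finrank K (homogeneousSubmodule σ K p) + finrank K (homogeneousSubmodule σ K q) := by
    rw [ker_gradedLinearCombination hs ht hp hq hst,
      LinearMap.finrank_range_of_inj (injective_gradedPairCombination hs ht hp hq hli),
      finrank_prod]
  rw [add_assoc, ← hker, ← range_gradedLinearCombination hg,
    LinearMap.finrank_range_add_finrank_ker, finrank_pi_fintype, Finset.sum_const,
    Finset.card_univ, smul_eq_mul]

theorem add_eq_and_sq_add_mul_add_sq_eq_of_forall_ge {a b w τ N : ℕ}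
    (h : ∀ m ≥ N, 2 * τ + 3 * ((a + b + m + 1) * (a + b + m + 2)) =
      (a + b + m + w + 1) * (a + b + m + w + 2) + (b + m + 1) * (b + m + 2) +
        (a + m + 1) * (a + m + 2)) :
    a + b = w ∧ a ^ 2 + a * b + b ^ 2 = τ := by
  have e₁ := h N le_rfl
  have e₂ := h (N + 1) (Nat.le_succ N)
  obtain rfl : a + b = w := by linarith
  exact ⟨rfl, by linarith⟩

theorem finrank_quotPiece3_add_finrank_inf (I : Ideal P3) (k : ℕ) :
    finrank ℂ (quotPiece3 I k) +
      finrank ℂ (homogeneousSubmodule (Fin 3) ℂ k ⊓ I.restrictScalars ℂ : Submodule ℂ P3) =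
      finrank ℂ (homogeneousSubmodule (Fin 3) ℂ k) := by
  have hker : LinearMap.ker (Ideal.Quotient.mkₐ ℂ I).toLinearMap = I.restrictScalars ℂ := by
    ext x
    simp [Ideal.Quotient.eq_zero_iff_mem]
  rw [← hker]
  exact LinearMap.finrank_map_add_finrank_inf_ker _ _

theorem syzygyModule_eq_ker (f : P3) :
    syzygyModule f = LinearMap.ker (Fintype.linearCombination P3 fun i => pderiv i f) :=
  SetLike.ext fun _ => Iff.rfl

theorem stmt_8_general (f : P3) (d : ℕ) (hfh : f.IsHomogeneous d)
    (τ : ℕ)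
    (hτ : ∃ N : ℕ, ∀ k, N ≤ k →
      Module.finrank ℂ (quotPiece3 (jacobianIdeal3 f) k) = τ)
    (a b : ℕ) (s t : Fin 3 → P3)
    (hsh : ∀ i, (s i).IsHomogeneous a) (hth : ∀ i, (t i).IsHomogeneous b)
    (B : Module.Basis (Fin 2) P3 (syzygyModule f))
    (hB0 : (B 0).val = s) (hB1 : (B 1).val = t) :
    a + b = d - 1 ∧ a ^ 2 + a * b + b ^ 2 = τ := by
  obtain ⟨N, hN⟩ := hτ
  have hsyz : LinearMap.ker (Fintype.linearCombination P3 fun i => pderiv i f) =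
      Submodule.span P3 {s, t} := by
    rw [← syzygyModule_eq_ker, ← hB0, ← hB1]
    exact Submodule.eq_span_pair_of_basis B
  have hli : LinearIndependent P3 ![s, t] := hB0 ▸ hB1 ▸ Submodule.linearIndependent_pair_of_basis B
  refine add_eq_and_sq_add_mul_add_sq_eq_of_forall_ge (N := N) fun m hm => ?_
  have hJ := finrank_homogeneousSubmodule_inf_span_add_of_syzygies_eq_span_pair
    (fun i => hfh.pderiv) hsh hth hsyz hli (p := b + m) (q := a + m) (e := a + b + m)
    (by ring) (by ring)
  have hQ := finrank_quotPiece3_add_finrank_inf (jacobianIdeal3 f) (a + b + m + (d - 1))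
  rw [hN _ (by omega)] at hQ
  unfold jacobianIdeal3 at hQ
  have h₁ := two_mul_finrank_homogeneousSubmodule_fin_three (K := ℂ) (a + b + m)
  have h₂ := two_mul_finrank_homogeneousSubmodule_fin_three (K := ℂ) (a + b + m + (d - 1))
  have h₃ := two_mul_finrank_homogeneousSubmodule_fin_three (K := ℂ) (b + m)
  have h₄ := two_mul_finrank_homogeneousSubmodule_fin_three (K := ℂ) (a + m)
  rw [Fintype.card_fin] at hJ
  linarith

theorem stmt_8 (f : P3) (d : ℕ) (hd : 2 ≤ d) (hsf : Squarefree f) (hfh : f.IsHomogeneous d)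
    (hdim : ringKrullDim (P3 ⧸ jacobianIdeal3 f) ≤ 1)
    (τ : ℕ)
    (hτ : ∃ N : ℕ, ∀ k, N ≤ k →
      Module.finrank ℂ (quotPiece3 (jacobianIdeal3 f) k) = τ)
    (a b : ℕ) (s t : Fin 3 → P3)
    (hs : s ∈ syzygyModule f) (ht : t ∈ syzygyModule f)
    (hsh : ∀ i, (s i).IsHomogeneous a) (hth : ∀ i, (t i).IsHomogeneous b)
    (B : Module.Basis (Fin 2) P3 (syzygyModule f))
    (hB0 : (B 0).val = s) (hB1 : (B 1).val = t) :
    a + b = d - 1 ∧ a ^ 2 + a * b + b ^ 2 = τ :=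
  stmt_8_general f d hfh τ hτ a b s t hsh hth B hB0 hB1
end
end
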